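/- Let (f, γ₁, γ₂, γ₃) be a transformation datum with f'(p) ≠ 0 and A(p) ≠ 0, and let (Ḡ, Γ̄, p̄, ξ̄) := (exp(2·γ₁(p))•G, Γ̄, f(p), f'(p)•ξ) with Γ̄(u, v) := Γ(u, v) + γ₂'(p)·(ξ(u)·v + ξ(v)·u) − γ₃'(p)·(G u v)·(G.symm ξ) be the transformed pointwise data, and let Ā, C̄₁, C̄₂ be the transformed coefficients. Then the invariant connection is unchanged: Γ̂[Ḡ, Γ̄, p̄, ξ̄; Ā, C̄₁, C̄₂] = Γ̂[G, Γ, p, ξ; A, C₁, C₂] as bilinear maps V × V → V. That is, the connection Γ̂ of eq. (con), obtained by subtracting from Γ its C₁- and C₂-dependent part, is invariant under the conformal–almost-geodesic frame transformations. -/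

import Mathlib

/-- Transformation rule (t1) for the non-minimal coupling coefficient `A`:
`Ā(f x) = exp(−(n−2)·γ₁ x)·A x`. -/
noncomputable def transA (n : ℕ) (f : ℝ ≃ ℝ) (γ₁ A : ℝ → ℝ) : ℝ → ℝ :=
  fun y => Real.exp (-((n : ℝ) - 2) * γ₁ (f.symm y)) * A (f.symm y)

/-- Transformation rule (t3) for the coefficient `C₁`:
`C̄₁(f x)·f' x = exp(−(n−2)·γ₁ x)·(C₁ x + A x·((n−1)/2·γ₂' x + (n−3)/2·γ₃' x))`. -/
noncomputable def transC1 (n : ℕ) (f : ℝ ≃ ℝ) (γ₁ γ₂ γ₃ A C₁ : ℝ → ℝ) : ℝ → ℝ :=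
  fun y => Real.exp (-((n : ℝ) - 2) * γ₁ (f.symm y)) *
    (C₁ (f.symm y) + A (f.symm y) *
      (((n : ℝ) - 1) / 2 * deriv γ₂ (f.symm y) + ((n : ℝ) - 3) / 2 * deriv γ₃ (f.symm y)))
    / deriv (⇑f) (f.symm y)

/-- Transformation rule (t4) for the coefficient `C₂`:
`C̄₂(f x)·f' x = exp(−(n−2)·γ₁ x)·(C₂ x + A x·((n−1)·γ₂' x − γ₃' x))`. -/
noncomputable def transC2 (n : ℕ) (f : ℝ ≃ ℝ) (γ₁ γ₂ γ₃ A C₂ : ℝ → ℝ) : ℝ → ℝ :=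
  fun y => Real.exp (-((n : ℝ) - 2) * γ₁ (f.symm y)) *
    (C₂ (f.symm y) + A (f.symm y) *
      (((n : ℝ) - 1) * deriv γ₂ (f.symm y) - deriv γ₃ (f.symm y)))
    / deriv (⇑f) (f.symm y)

/-- The invariant connection `Γ̂` of eq. (con), evaluated pointwise on data
`(G, Γ, p, ξ)` with coefficients `(A, C₁, C₂)`:
`Γ̂(u,v) = Γ(u,v) − P₁(p)·(ξ(u)·v + ξ(v)·u) − P₂(p)·(G u v)·(G⁻¹ ξ)`, where
`P₁ = (2·C₁ + (n−3)·C₂)/((n−1)·(n−2)·A)` and `P₂ = (C₂ − 2·C₁)/((n−2)·A)`. -/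
noncomputable def invariantConnection {V : Type*} [AddCommGroup V] [Module ℝ V]
    (n : ℕ) (G : V ≃ₗ[ℝ] Module.Dual ℝ V) (Γ : V → V → V) (p : ℝ)
    (ξ : Module.Dual ℝ V) (A C₁ C₂ : ℝ → ℝ) (u v : V) : V :=
  Γ u v
    - ((2 * C₁ p + ((n : ℝ) - 3) * C₂ p) / (((n : ℝ) - 1) * ((n : ℝ) - 2) * A p))
        • (ξ u • v + ξ v • u)
    - ((C₂ p - 2 * C₁ p) / (((n : ℝ) - 2) * A p)) • ((G u v) • G.symm ξ)

/-! Γ̂ = Γ − P₁·(ξ ⊗ id + id ⊗ ξ) − P₂·G ⊗ G⁻¹ξ. Under the transformation both tensors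
get multiplied by f'(p) (the conformal factor cancels between G and G⁻¹), and the rules (t1), (t3), (t4)
are exactly such that P̄₁·f' = P₁ + γ₂' and P̄₂·f' = P₂ − γ₃', which absorbs the change Γ̄ − Γ. -/

section Coefficients

variable (n : ℕ) (f : ℝ ≃ ℝ) (γ₁ γ₂ γ₃ A C₁ C₂ : ℝ → ℝ) {x : ℝ}

noncomputable def coeffP₁ (p : ℝ) : ℝ :=
  (2 * C₁ p + ((n : ℝ) - 3) * C₂ p) / (((n : ℝ) - 1) * ((n : ℝ) - 2) * A p)

noncomputable def coeffP₂ (p : ℝ) : ℝ :=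
  (C₂ p - 2 * C₁ p) / (((n : ℝ) - 2) * A p)

theorem transA_apply_self :
    transA n f γ₁ A (f x) = Real.exp (-((n : ℝ) - 2) * γ₁ x) * A x := by
  simp only [transA, Equiv.symm_apply_apply]

variable {f}

theorem transC1_apply_self_mul_deriv (hfx : deriv (⇑f) x ≠ 0) :
    transC1 n f γ₁ γ₂ γ₃ A C₁ (f x) * deriv (⇑f) x =
      Real.exp (-((n : ℝ) - 2) * γ₁ x) *
        (C₁ x + A x * (((n : ℝ) - 1) / 2 * deriv γ₂ x + ((n : ℝ) - 3) / 2 * deriv γ₃ x)) := by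
  simp only [transC1, Equiv.symm_apply_apply]
  exact div_mul_cancel₀ _ hfx

theorem transC2_apply_self_mul_deriv (hfx : deriv (⇑f) x ≠ 0) :
    transC2 n f γ₁ γ₂ γ₃ A C₂ (f x) * deriv (⇑f) x =
      Real.exp (-((n : ℝ) - 2) * γ₁ x) *
        (C₂ x + A x * (((n : ℝ) - 1) * deriv γ₂ x - deriv γ₃ x)) := by
  simp only [transC2, Equiv.symm_apply_apply]
  exact div_mul_cancel₀ _ hfx

variable {n}

theorem coeffP₁_trans_mul_deriv (hn₁ : (n : ℝ) - 1 ≠ 0) (hn₂ : (n : ℝ) - 2 ≠ 0)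
    (hfx : deriv (⇑f) x ≠ 0) (hA : A x ≠ 0) :
    coeffP₁ n (transA n f γ₁ A) (transC1 n f γ₁ γ₂ γ₃ A C₁) (transC2 n f γ₁ γ₂ γ₃ A C₂) (f x)
        * deriv (⇑f) x = coeffP₁ n A C₁ C₂ x + deriv γ₂ x := by
  rw [coeffP₁, div_mul_eq_mul_div, add_mul, mul_assoc, mul_assoc,
    transC1_apply_self_mul_deriv _ _ _ _ _ _ hfx, transC2_apply_self_mul_deriv _ _ _ _ _ _ hfx,
    transA_apply_self, coeffP₁]
  field_simp
  ring

theorem coeffP₂_trans_mul_deriv (hn₂ : (n : ℝ) - 2 ≠ 0) (hfx : deriv (⇑f) x ≠ 0)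
    (hA : A x ≠ 0) :
    coeffP₂ n (transA n f γ₁ A) (transC1 n f γ₁ γ₂ γ₃ A C₁) (transC2 n f γ₁ γ₂ γ₃ A C₂) (f x)
        * deriv (⇑f) x = coeffP₂ n A C₁ C₂ x - deriv γ₃ x := by
  rw [coeffP₂, div_mul_eq_mul_div, sub_mul, mul_assoc,
    transC1_apply_self_mul_deriv _ _ _ _ _ _ hfx, transC2_apply_self_mul_deriv _ _ _ _ _ _ hfx,
    transA_apply_self, coeffP₂]
  field_simp
  ring

end Coefficients

section Tensors

variable {V : Type*} [AddCommGroup V] [Module ℝ V]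

def symmetrizedTerm (ξ : Module.Dual ℝ V) (u v : V) : V := ξ u • v + ξ v • u

def gradientTerm (G : V ≃ₗ[ℝ] Module.Dual ℝ V) (ξ : Module.Dual ℝ V) (u v : V) : V :=
  G u v • G.symm ξ

theorem invariantConnection_eq (n : ℕ) (G : V ≃ₗ[ℝ] Module.Dual ℝ V) (Γ : V → V → V) (p : ℝ)
    (ξ : Module.Dual ℝ V) (A C₁ C₂ : ℝ → ℝ) (u v : V) :
    invariantConnection n G Γ p ξ A C₁ C₂ u v =
      Γ u v - coeffP₁ n A C₁ C₂ p • symmetrizedTerm ξ u v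
        - coeffP₂ n A C₁ C₂ p • gradientTerm G ξ u v :=
  rfl

theorem symmetrizedTerm_smul (a : ℝ) (ξ : Module.Dual ℝ V) (u v : V) :
    symmetrizedTerm (a • ξ) u v = a • symmetrizedTerm ξ u v := by
  simp only [symmetrizedTerm, LinearMap.smul_apply, smul_eq_mul, mul_smul, smul_add]

theorem gradientTerm_conformal_smul (G : V ≃ₗ[ℝ] Module.Dual ℝ V) {c : ℝ} (hc : c ≠ 0)
    (a : ℝ) (ξ : Module.Dual ℝ V) (u v : V) :
    gradientTerm (G.trans (LinearEquiv.smulOfNeZero ℝ (Module.Dual ℝ V) c hc)) (a • ξ) u v =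
      a • gradientTerm G ξ u v := by
  simp only [gradientTerm, LinearEquiv.trans_apply, LinearEquiv.symm_trans_apply,
    LinearEquiv.smulOfNeZero_apply, LinearEquiv.smulOfNeZero_symm_apply, Units.smul_def,
    Units.val_inv_eq_inv_val, Units.val_mk0, map_smul, LinearMap.smul_apply, smul_eq_mul,
    smul_smul]
  field_simp

end Tensors

theorem invariantConnection_invariant_general (n : ℕ) (hn : 3 ≤ n)
    {V : Type*} [AddCommGroup V] [Module ℝ V]
    (G : V ≃ₗ[ℝ] Module.Dual ℝ V) (Γ : V → V → V) (p : ℝ) (ξ : Module.Dual ℝ V)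
    (f : ℝ ≃ ℝ) (γ₁ γ₂ γ₃ : ℝ → ℝ)
    (hf' : deriv (⇑f) p ≠ 0)
    (A C₁ C₂ : ℝ → ℝ) (hA : A p ≠ 0) :
    ∀ u v,
      invariantConnection n
        (G.trans (LinearEquiv.smulOfNeZero ℝ (Module.Dual ℝ V)
          (Real.exp (2 * γ₁ p)) (Real.exp_ne_zero _)))
        (fun u v => Γ u v + deriv γ₂ p • (ξ u • v + ξ v • u)
          - deriv γ₃ p • ((G u v) • G.symm ξ))
        (f p) (deriv (⇑f) p • ξ)
        (transA n f γ₁ A) (transC1 n f γ₁ γ₂ γ₃ A C₁) (transC2 n f γ₁ γ₂ γ₃ A C₂) u v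
      = invariantConnection n G Γ p ξ A C₁ C₂ u v := by
  intro u v
  have hn₃ : (3 : ℝ) ≤ n := by exact_mod_cast hn
  have hn₁ : (n : ℝ) - 1 ≠ 0 := by linarith
  have hn₂ : (n : ℝ) - 2 ≠ 0 := by linarith
  have hP₁ := coeffP₁_trans_mul_deriv γ₁ γ₂ γ₃ A C₁ C₂ hn₁ hn₂ hf' hA
  have hP₂ := coeffP₂_trans_mul_deriv γ₁ γ₂ γ₃ A C₁ C₂ hn₂ hf' hA
  rw [invariantConnection_eq, invariantConnection_eq, symmetrizedTerm_smul,
    gradientTerm_conformal_smul, smul_smul _ (deriv _ p), smul_smul _ (deriv _ p), hP₁, hP₂]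
  simp only [symmetrizedTerm, gradientTerm]
  module

/-- The invariant connection `Γ̂` of eq. (con) is unchanged under the
conformal–almost-geodesic frame transformations: computing `Γ̂` from the
transformed pointwise data `(exp(2γ₁(p))•G, Γ̄, f(p), f'(p)•ξ)` (with
`Γ̄(u,v) = Γ(u,v) + γ₂'(p)(ξ(u)v + ξ(v)u) − γ₃'(p)(G u v)(G⁻¹ξ)`) and the
transformed coefficients `(Ā, C̄₁, C̄₂)` gives the same bilinear map
`V × V → V` as computing it from the original data and coefficients. -/
theorem invariantConnection_invariant (n : ℕ) (hn : 3 ≤ n)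
    {V : Type*} [AddCommGroup V] [Module ℝ V]
    (G : V ≃ₗ[ℝ] Module.Dual ℝ V) (Γ : V → V → V) (p : ℝ) (ξ : Module.Dual ℝ V)
    (f : ℝ ≃ ℝ) (γ₁ γ₂ γ₃ : ℝ → ℝ)
    (hf : Differentiable ℝ ⇑f) (hγ₁ : Differentiable ℝ γ₁)
    (hγ₂ : Differentiable ℝ γ₂) (hγ₃ : Differentiable ℝ γ₃)
    (hf' : deriv (⇑f) p ≠ 0)
    (A C₁ C₂ : ℝ → ℝ) (hA : A p ≠ 0) :
    ∀ u v,
      invariantConnection n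
        (G.trans (LinearEquiv.smulOfNeZero ℝ (Module.Dual ℝ V)
          (Real.exp (2 * γ₁ p)) (Real.exp_ne_zero _)))
        (fun u v => Γ u v + deriv γ₂ p • (ξ u • v + ξ v • u)
          - deriv γ₃ p • ((G u v) • G.symm ξ))
        (f p) (deriv (⇑f) p • ξ)
        (transA n f γ₁ A) (transC1 n f γ₁ γ₂ γ₃ A C₁) (transC2 n f γ₁ γ₂ γ₃ A C₂) u v
      = invariantConnection n G Γ p ξ A C₁ C₂ u v :=
  invariantConnection_invariant_general n hn G Γ p ξ f γ₁ γ₂ γ₃ hf' A C₁ C₂ hA
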